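/- arXiv:cs/0602077 — 3 statements merged into one kernel-verified Lean document; each statement's English description precedes it below -/
import Mathlib

section
/- Let f : Obj(B) → Obj(A) be a fiber-preserving map, regarded as a relation R from A to B. Then R⁻¹ is a simulation if and only if f defines a V-functor B → A, and in that case R is also a simulation if and only if for all b ∈ B and a' ∈ A, A(f(b), a') = ⋁_{b' : f(b') = a'} B(b, b'). -/
/-- A quantaloid: a (small) locally ordered bicategory whose hom-posets are
complete lattices and whose composition preserves suprema in each variable. -/
structure Quantaloid where
  Obj : Type
  Hom : Obj → Obj → Type
  [lat : ∀ u v : Obj, CompleteLattice (Hom u v)]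
  comp : ∀ {u v w : Obj}, Hom u v → Hom v w → Hom u w
  id : ∀ u : Obj, Hom u u
  comp_assoc : ∀ {u v w x : Obj} (f : Hom u v) (g : Hom v w) (h : Hom w x),
    comp (comp f g) h = comp f (comp g h)
  id_comp : ∀ {u v : Obj} (f : Hom u v), comp (id u) f = f
  comp_id : ∀ {u v : Obj} (f : Hom u v), comp f (id v) = f
  comp_sSup_left : ∀ {u v w : Obj} (S : Set (Hom u v)) (g : Hom v w),
    comp (sSup S) g = sSup ((fun f => comp f g) '' S)
  comp_sSup_right : ∀ {u v w : Obj} (f : Hom u v) (S : Set (Hom v w)),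
    comp f (sSup S) = sSup ((fun g => comp f g) '' S)

attribute [instance] Quantaloid.lat

/-- Transport of homs along equalities of objects. -/
def Quantaloid.cast (V : Quantaloid) {u u' v v' : V.Obj} (hu : u = u') (hv : v = v')
    (f : V.Hom u v) : V.Hom u' v' := hu ▸ hv ▸ f

/-- A `V`-category. -/
structure VCat (V : Quantaloid) where
  Obj : Type
  pt : Obj → V.Obj
  hom : ∀ a b : Obj, V.Hom (pt a) (pt b)
  id_le : ∀ a, V.id (pt a) ≤ hom a a
  comp_le : ∀ a b c, V.comp (hom a b) (hom b c) ≤ hom a c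

/-- A simulation from `A` to `B`. -/
def IsSimulation (V : Quantaloid) (A B : VCat V) (R : A.Obj → B.Obj → Prop) : Prop :=
  (∀ a b, R a b → A.pt a = B.pt b) ∧
  ∀ (a : A.Obj) (b : B.Obj), R a b → ∀ (a' : A.Obj) (h : A.pt a = B.pt b),
    V.cast h rfl (A.hom a a') ≤
      sSup {x : V.Hom (B.pt b) (A.pt a') |
        ∃ (b' : B.Obj) (h' : A.pt a' = B.pt b'), R a' b' ∧ x = V.cast rfl h'.symm (B.hom b b')}

/-- A bisimulation from `A` to `B`. -/
def IsBisimulation (V : Quantaloid) (A B : VCat V) (R : A.Obj → B.Obj → Prop) : Prop :=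
  IsSimulation V A B R ∧ IsSimulation V B A (fun b a => R a b)

/-- Bisimilarity of `V`-categories. -/
def Bisimilar (V : Quantaloid) (A B : VCat V) : Prop :=
  ∃ R, IsBisimulation V A B R ∧ (∀ a, ∃ b, R a b) ∧ (∀ b, ∃ a, R a b)

/-- A `V`-functor. -/
structure VFunctor (V : Quantaloid) (A B : VCat V) where
  toFun : A.Obj → B.Obj
  pt_eq : ∀ a, B.pt (toFun a) = A.pt a
  map_le : ∀ a a',
    V.cast (pt_eq a).symm (pt_eq a').symm (A.hom a a') ≤ B.hom (toFun a) (toFun a')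

/-- A surjective functional bisimulation (an "open" map). -/
def VFunctor.IsSFB {V : Quantaloid} {A B : VCat V} (f : VFunctor V A B) : Prop :=
  Function.Surjective f.toFun ∧
  ∀ (a : A.Obj) (b : B.Obj),
    B.hom (f.toFun a) b =
      sSup {x : V.Hom (B.pt (f.toFun a)) (B.pt b) |
        ∃ (a' : A.Obj) (h : f.toFun a' = b),
          x = V.cast (f.pt_eq a).symm ((f.pt_eq a').symm.trans (congrArg B.pt h)) (A.hom a a')}

theorem Quantaloid.cast_cast (V : Quantaloid) {u u' u'' v v' v'' : V.Obj}
    (hu : u = u') (hv : v = v') (hu' : u' = u'') (hv' : v' = v'') (x : V.Hom u v) :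
    V.cast hu' hv' (V.cast hu hv x) = V.cast (hu.trans hu') (hv.trans hv') x := by
  subst hu; subst hv; subst hu'; subst hv'; rfl

theorem Quantaloid.cast_le_cast (V : Quantaloid) {u u' v v' : V.Obj}
    (hu : u = u') (hv : v = v') {x y : V.Hom u v} :
    V.cast hu hv x ≤ V.cast hu hv y ↔ x ≤ y := by
  subst hu; subst hv; rfl

theorem Quantaloid.cast_mono (V : Quantaloid) {u u' v v' : V.Obj}
    (hu : u = u') (hv : v = v') {x y : V.Hom u v} (h : x ≤ y) :
    V.cast hu hv x ≤ V.cast hu hv y := (V.cast_le_cast hu hv).mpr h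

theorem Quantaloid.cast_sSup (V : Quantaloid) {u u' v v' : V.Obj}
    (hu : u = u') (hv : v = v') (S : Set (V.Hom u v)) :
    V.cast hu hv (sSup S) = sSup (V.cast hu hv '' S) := by
  subst hu; subst hv
  show sSup S = sSup ((fun x => x) '' S)
  simp

/-- for a fiber-preserving map `f : Obj(B) → Obj(A)` regarded as the
relation `R = {(f b, b)}` from `A` to `B`: `R⁻¹` is a simulation iff `f` is a
`V`-functor, and in that case `R` is a simulation iff condition (1') holds. -/
theorem functional_bisimulation_characterization (V : Quantaloid) (A B : VCat V)
    (f : B.Obj → A.Obj) (hf : ∀ b, A.pt (f b) = B.pt b) :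
    (IsSimulation V B A (fun b a => a = f b) ↔
      ∀ b b', V.cast (hf b).symm (hf b').symm (B.hom b b') ≤ A.hom (f b) (f b')) ∧
    ((∀ b b', V.cast (hf b).symm (hf b').symm (B.hom b b') ≤ A.hom (f b) (f b')) →
      (IsSimulation V A B (fun a b => a = f b) ↔
        ∀ (b : B.Obj) (a' : A.Obj),
          A.hom (f b) a' =
            sSup {x : V.Hom (A.pt (f b)) (A.pt a') |
              ∃ (b' : B.Obj) (h : f b' = a'),
                x = V.cast (hf b).symm ((hf b').symm.trans (congrArg A.pt h)) (B.hom b b')})) := by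
  constructor
  · constructor
    · -- R⁻¹ simulation → functor
      intro hsim b b'
      have h := hsim.2 b (f b) rfl b' (hf b).symm
      have h2 : sSup {x : V.Hom (A.pt (f b)) (B.pt b') |
          ∃ (a' : A.Obj) (h' : B.pt b' = A.pt a'), a' = f b' ∧
            x = V.cast rfl h'.symm (A.hom (f b) a')} ≤
          V.cast rfl (hf b') (A.hom (f b) (f b')) := by
        apply sSup_le
        rintro x ⟨a', h', rfl, rfl⟩
        exact le_rfl
      have h3 := le_trans h h2
      have h4 := (V.cast_le_cast (u' := A.pt (f b)) (v' := A.pt (f b')) rfl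
        (hf b').symm).mpr h3
      rw [V.cast_cast, V.cast_cast] at h4
      exact h4
    · -- functor → R⁻¹ simulation
      intro hfun
      constructor
      · rintro b a rfl; exact (hf b).symm
      · rintro b a rfl b' h
        refine le_trans ?_ (le_sSup ⟨f b', (hf b').symm, rfl, rfl⟩)
        have h4 := V.cast_mono rfl (hf b') (hfun b b')
        rw [V.cast_cast] at h4
        exact h4
  · intro hfun
    constructor
    · -- R simulation → condition (1')
      intro hsim b a'
      apply le_antisymm
      · have h := hsim.2 (f b) b rfl a' (hf b)
        have h2 := V.cast_mono (hf b).symm rfl h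
        rw [V.cast_cast] at h2
        refine le_trans h2 ?_
        rw [V.cast_sSup]
        apply sSup_le
        rintro x ⟨y, ⟨b', h', heq, rfl⟩, rfl⟩
        apply le_sSup
        refine ⟨b', heq.symm, ?_⟩
        rw [V.cast_cast]
      · apply sSup_le
        rintro x ⟨b', rfl, rfl⟩
        exact hfun b b'
    · -- condition (1') → R simulation
      intro hcond
      constructor
      · rintro a b rfl; exact hf b
      · rintro a b rfl a' h
        rw [hcond b a', V.cast_sSup]
        apply sSup_le
        rintro x ⟨y, ⟨b', rfl, rfl⟩, rfl⟩
        apply le_sSup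
        refine ⟨b', hf b', rfl, ?_⟩
        rw [V.cast_cast]
end

section
/- Let ∼ be a bisimulation equivalence on a V-category A. Define Ā(a,b) = ⋁_{b' ∼ b} A(a,b'). Then a ∼ a' implies Ā(a,-) = Ā(a',-), so setting Ã([a],[b]) = Ā(a,b) gives a well-defined V-category structure on the quotient set Obj(A)/∼, and the quotient map a ↦ [a] is a V-functor A → Ã which is a surjective functional bisimulation. -/
/-- The hom `Ā(a,b) = ⋁_{b' ∼ b} A(a,b')`. -/
def barHom (V : Quantaloid) (A : VCat V) (r : A.Obj → A.Obj → Prop) (a b : A.Obj) :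
    V.Hom (A.pt a) (A.pt b) :=
  sSup {x : V.Hom (A.pt a) (A.pt b) |
    ∃ (b' : A.Obj) (_ : r b' b) (h : A.pt b' = A.pt b), x = V.cast rfl h (A.hom a b')}

namespace Quantaloid

variable (V : Quantaloid)

theorem cast_rfl {u v : V.Obj} (f : V.Hom u v) : V.cast rfl rfl f = f := rfl

theorem cast_cast_s5 {u u' u'' v v' v'' : V.Obj} (hu : u = u') (hv : v = v')
    (hu' : u' = u'') (hv' : v' = v'') (f : V.Hom u v) :
    V.cast hu' hv' (V.cast hu hv f) = V.cast (hu.trans hu') (hv.trans hv') f := by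
  cases hu; cases hv; cases hu'; cases hv'; rfl

theorem cast_le_iff {u u' v v' : V.Obj} (hu : u = u') (hv : v = v')
    (f : V.Hom u v) (g : V.Hom u' v') :
    V.cast hu hv f ≤ g ↔ f ≤ V.cast hu.symm hv.symm g := by
  cases hu; cases hv; exact Iff.rfl

theorem cast_mono_s5 {u u' v v' : V.Obj} (hu : u = u') (hv : v = v')
    {f g : V.Hom u v} (h : f ≤ g) : V.cast hu hv f ≤ V.cast hu hv g := by
  cases hu; cases hv; exact h

theorem cast_sSup_s5 {u u' v v' : V.Obj} (hu : u = u') (hv : v = v')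
    (S : Set (V.Hom u v)) :
    V.cast hu hv (sSup S) = sSup (V.cast hu hv '' S) := by
  cases hu; cases hv
  rw [show V.cast rfl rfl = (_root_.id : V.Hom u v → V.Hom u v) from rfl, Set.image_id]; rfl

theorem comp_cast {u u' v v' w w' : V.Obj} (hu : u = u') (hv : v = v') (hw : w = w')
    (f : V.Hom u v) (g : V.Hom v w) :
    V.comp (V.cast hu hv f) (V.cast hv hw g) = V.cast hu hw (V.comp f g) := by
  cases hu; cases hv; cases hw; rfl

theorem comp_mono_right {u v w : V.Obj} (f : V.Hom u v) {g g' : V.Hom v w}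
    (hg : g ≤ g') : V.comp f g ≤ V.comp f g' := by
  have h := V.comp_sSup_right f {g, g'}
  rw [sSup_pair, sup_eq_right.mpr hg] at h
  rw [h]
  exact le_sSup ⟨g, by simp, rfl⟩

theorem comp_mono_left {u v w : V.Obj} {f f' : V.Hom u v} (g : V.Hom v w)
    (hf : f ≤ f') : V.comp f g ≤ V.comp f' g := by
  have h := V.comp_sSup_left {f, f'} g
  rw [sSup_pair, sup_eq_right.mpr hf] at h
  rw [h]
  exact le_sSup ⟨f, by simp, rfl⟩

end Quantaloid

section Quot

variable (V : Quantaloid) (A : VCat V) (r : A.Obj → A.Obj → Prop)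

theorem barHom_congr_right (hequiv : Equivalence r) (a : A.Obj) {b b' : A.Obj}
    (hbb : r b' b) (h : A.pt b' = A.pt b) :
    V.cast rfl h (barHom V A r a b') = barHom V A r a b := by
  rw [barHom, V.cast_sSup_s5]
  congr 1
  ext x
  constructor
  · rintro ⟨y, ⟨c, hc, hcp, rfl⟩, rfl⟩
    exact ⟨c, hequiv.trans hc hbb, hcp.trans h, by rw [V.cast_cast_s5]⟩
  · rintro ⟨c, hc, hcp, rfl⟩
    refine ⟨V.cast rfl (hcp.trans h.symm) (A.hom a c),
      ⟨c, hequiv.trans hc (hequiv.symm hbb), hcp.trans h.symm, rfl⟩, ?_⟩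
    rw [V.cast_cast_s5]

/-- The simulation property, rephrased via `barHom`. -/
theorem sim_barHom (hequiv : Equivalence r) (hbis : IsBisimulation V A A r)
    {a b : A.Obj} (hab : r a b) (a' : A.Obj) (h : A.pt a = A.pt b) :
    V.cast h rfl (A.hom a a') ≤ barHom V A r b a' := by
  refine le_trans (hbis.1.2 a b hab a' h) (le_of_eq ?_)
  congr 1
  ext x
  constructor
  · rintro ⟨b', h', hr, rfl⟩
    exact ⟨b', hequiv.symm hr, h'.symm, rfl⟩
  · rintro ⟨c, hc, hcp, rfl⟩
    exact ⟨c, hcp.symm, hequiv.symm hc, rfl⟩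

theorem barHom_le (hequiv : Equivalence r) (hbis : IsBisimulation V A A r)
    (a a' b : A.Obj) (haa : r a a') (hp : A.pt a = A.pt a') :
    barHom V A r a b ≤ V.cast hp.symm rfl (barHom V A r a' b) := by
  refine sSup_le ?_
  rintro x ⟨b', hb', hbp, rfl⟩
  have key : V.cast hp hbp (A.hom a b') ≤ barHom V A r a' b := by
    calc V.cast hp hbp (A.hom a b')
        = V.cast rfl hbp (V.cast hp rfl (A.hom a b')) := by rw [V.cast_cast_s5]
      _ ≤ V.cast rfl hbp (barHom V A r a' b') :=
          V.cast_mono_s5 _ _ (sim_barHom V A r hequiv hbis haa b' hp)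
      _ = barHom V A r a' b := barHom_congr_right V A r hequiv a' hb' hbp
  calc V.cast rfl hbp (A.hom a b')
      = V.cast hp.symm rfl (V.cast hp hbp (A.hom a b')) := by rw [V.cast_cast_s5]
    _ ≤ V.cast hp.symm rfl (barHom V A r a' b) := V.cast_mono_s5 _ _ key

theorem barHom_eq (hequiv : Equivalence r) (hbis : IsBisimulation V A A r)
    (a a' b : A.Obj) (haa : r a a') (hp : A.pt a = A.pt a') :
    barHom V A r a b = V.cast hp.symm rfl (barHom V A r a' b) := by
  refine le_antisymm (barHom_le V A r hequiv hbis a a' b haa hp) ?_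
  have h2 := barHom_le V A r hequiv hbis a' a b (hequiv.symm haa) hp.symm
  calc V.cast hp.symm rfl (barHom V A r a' b)
      ≤ V.cast hp.symm rfl (V.cast hp.symm.symm rfl (barHom V A r a b)) :=
        V.cast_mono_s5 _ _ h2
    _ = barHom V A r a b := by rw [V.cast_cast_s5]; rfl

end Quot

def qsetoid {A : Type} (r : A → A → Prop) (hequiv : Equivalence r) : Setoid A :=
  ⟨r, hequiv⟩

def qpt (V : Quantaloid) (A : VCat V) (r : A.Obj → A.Obj → Prop)
    (hequiv : Equivalence r) (hbis : IsBisimulation V A A r) :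
    Quotient (qsetoid r hequiv) → V.Obj :=
  Quotient.lift A.pt fun a b hab => hbis.1.1 a b hab

def qhom (V : Quantaloid) (A : VCat V) (r : A.Obj → A.Obj → Prop)
    (hequiv : Equivalence r) (hbis : IsBisimulation V A A r)
    (x y : Quotient (qsetoid r hequiv)) :
    V.Hom (qpt V A r hequiv hbis x) (qpt V A r hequiv hbis y) :=
  sSup {f | ∃ (a b : A.Obj) (hax : Quotient.mk (qsetoid r hequiv) a = x)
      (hby : Quotient.mk (qsetoid r hequiv) b = y),
    f = V.cast (congrArg (qpt V A r hequiv hbis) hax)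
          (congrArg (qpt V A r hequiv hbis) hby) (A.hom a b)}

theorem qhom_mk (V : Quantaloid) (A : VCat V) (r : A.Obj → A.Obj → Prop)
    (hequiv : Equivalence r) (hbis : IsBisimulation V A A r) (a b : A.Obj) :
    qhom V A r hequiv hbis (Quotient.mk (qsetoid r hequiv) a)
      (Quotient.mk (qsetoid r hequiv) b) = barHom V A r a b := by
  apply le_antisymm
  · refine sSup_le ?_
    rintro x ⟨a₀, b₀, hax, hby, rfl⟩
    have ha : r a₀ a := Quotient.exact hax
    have hb : r b₀ b := Quotient.exact hby
    have hpa : A.pt a₀ = A.pt a := hbis.1.1 _ _ ha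
    have hpb : A.pt b₀ = A.pt b := hbis.1.1 _ _ hb
    show V.cast hpa hpb (A.hom a₀ b₀) ≤ barHom V A r a b
    calc V.cast hpa hpb (A.hom a₀ b₀)
        ≤ V.cast hpa hpb (barHom V A r a₀ b₀) :=
          V.cast_mono_s5 _ _ (le_sSup ⟨b₀, hequiv.refl b₀, rfl, rfl⟩)
      _ = barHom V A r a b := by
          rw [barHom_eq V A r hequiv hbis a₀ a b₀ ha hpa, V.cast_cast_s5]
          exact barHom_congr_right V A r hequiv a hb hpb
  · refine sSup_le ?_
    rintro x ⟨b', hb', hbp, rfl⟩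
    exact le_sSup ⟨a, b', rfl, Quotient.sound hb', rfl⟩

theorem comp_barHom (V : Quantaloid) (A : VCat V) (r : A.Obj → A.Obj → Prop)
    (hequiv : Equivalence r) (hbis : IsBisimulation V A A r) (a b c : A.Obj) :
    V.comp (barHom V A r a b) (barHom V A r b c) ≤ barHom V A r a c := by
  refine le_trans (le_of_eq (V.comp_sSup_left _ _)) (sSup_le ?_)
  rintro x ⟨y, ⟨b', hb', hbp, rfl⟩, rfl⟩
  show V.comp (V.cast rfl hbp (A.hom a b')) (barHom V A r b c) ≤ barHom V A r a c
  have e2 : barHom V A r b c = V.cast hbp rfl (barHom V A r b' c) := by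
    rw [barHom_eq V A r hequiv hbis b' b c hb' hbp, V.cast_cast_s5]
    rfl
  rw [e2, V.comp_cast rfl hbp rfl]
  refine le_trans (le_of_eq (V.comp_sSup_right _ _)) (sSup_le ?_)
  rintro x ⟨y, ⟨c', hc', hcp, rfl⟩, rfl⟩
  show V.comp (A.hom a b') (V.cast rfl hcp (A.hom b' c')) ≤ barHom V A r a c
  calc V.comp (A.hom a b') (V.cast rfl hcp (A.hom b' c'))
      = V.cast rfl hcp (V.comp (A.hom a b') (A.hom b' c')) :=
        V.comp_cast rfl rfl hcp _ _
    _ ≤ V.cast rfl hcp (A.hom a c') := V.cast_mono_s5 _ _ (A.comp_le a b' c')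
    _ ≤ barHom V A r a c := le_sSup ⟨c', hc', hcp, rfl⟩

def qcat (V : Quantaloid) (A : VCat V) (r : A.Obj → A.Obj → Prop)
    (hequiv : Equivalence r) (hbis : IsBisimulation V A A r) : VCat V where
  Obj := Quotient (qsetoid r hequiv)
  pt := qpt V A r hequiv hbis
  hom := qhom V A r hequiv hbis
  id_le := by
    intro x
    induction x using Quotient.ind with
    | _ a =>
      have h1 : A.hom a a ≤ barHom V A r a a := le_sSup ⟨a, hequiv.refl a, rfl, rfl⟩
      exact le_trans (le_trans (A.id_le a) h1)
        (le_of_eq (qhom_mk V A r hequiv hbis a a).symm)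
  comp_le := by
    intro x y z
    induction x using Quotient.ind with
    | _ a =>
    induction y using Quotient.ind with
    | _ b =>
    induction z using Quotient.ind with
    | _ c =>
      rw [qhom_mk V A r hequiv hbis a b, qhom_mk V A r hequiv hbis b c,
        qhom_mk V A r hequiv hbis a c]
      exact comp_barHom V A r hequiv hbis a b c

def qfun (V : Quantaloid) (A : VCat V) (r : A.Obj → A.Obj → Prop)
    (hequiv : Equivalence r) (hbis : IsBisimulation V A A r) :
    VFunctor V A (qcat V A r hequiv hbis) where
  toFun := Quotient.mk (qsetoid r hequiv)
  pt_eq := fun _ => rfl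
  map_le := fun a a' => le_sSup ⟨a, a', rfl, rfl, rfl⟩

/-- for a bisimulation equivalence `∼` on `A`, `a ∼ a'` implies
`Ā(a,-) = Ā(a',-)`, and the quotient carries a `V`-category structure making the
quotient map a surjective functional bisimulation `V`-functor with
`Ã([a],[b]) = Ā(a,b)`. -/
theorem quotient_by_bisimulation_equivalence (V : Quantaloid) (A : VCat V)
    (r : A.Obj → A.Obj → Prop) (hequiv : Equivalence r)
    (hbis : IsBisimulation V A A r) :
    (∀ (a a' b : A.Obj) (_ : r a a') (hp : A.pt a = A.pt a'),
      barHom V A r a b = V.cast hp.symm rfl (barHom V A r a' b)) ∧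
    ∃ (Q : VCat V) (q : VFunctor V A Q),
      Function.Surjective q.toFun ∧
      (∀ a a', q.toFun a = q.toFun a' ↔ r a a') ∧
      (∀ a b, Q.hom (q.toFun a) (q.toFun b) =
        V.cast (q.pt_eq a).symm (q.pt_eq b).symm (barHom V A r a b)) ∧
      q.IsSFB := by

  constructor
  · intro a a' b haa hp
    exact barHom_eq V A r hequiv hbis a a' b haa hp
  · refine ⟨qcat V A r hequiv hbis, qfun V A r hequiv hbis, ?_, ?_, ?_, ?_, ?_⟩
    · exact fun x => Quotient.exists_rep x
    · intro a a'
      exact ⟨fun h => Quotient.exact h, fun h => Quotient.sound h⟩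
    · intro a b
      exact qhom_mk V A r hequiv hbis a b
    · exact fun x => Quotient.exists_rep x
    · intro a b
      induction b using Quotient.ind with
      | _ b0 =>
        have e : (qcat V A r hequiv hbis).hom ((qfun V A r hequiv hbis).toFun a)
            (Quotient.mk (qsetoid r hequiv) b0) = barHom V A r a b0 :=
          qhom_mk V A r hequiv hbis a b0
        rw [e]
        refine le_antisymm (sSup_le ?_) (sSup_le ?_)
        · rintro x ⟨b', hb', hbp, rfl⟩
          exact le_sSup ⟨b', Quotient.sound hb', rfl⟩
        · rintro x ⟨a', h, rfl⟩
          exact le_sSup ⟨a', Quotient.exact h, hbis.1.1 a' b0 (Quotient.exact h), rfl⟩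
end

section
/- Let f : A → B be a split epimorphism of V-categories such that for every a ∈ A there exists a section s of f (a V-functor s : B → A with f ∘ s = id and B(b,b') = A(s(b), s(b')) for all b,b') whose image contains a. Then f is a surjective functional bisimulation. -/
lemma Quantaloid.cast_heq (V : Quantaloid) {u u' v v' : V.Obj} (hu : u = u') (hv : v = v')
    (f : V.Hom u v) : HEq (V.cast hu hv f) f := by
  subst hu; subst hv; rfl

/-- a split epimorphism of `V`-categories admitting, through every
object of the domain, a section (a `V`-functor `s` with `f ∘ s = id` and
`B(b,b') = A(s b, s b')`) is a surjective functional bisimulation. -/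
theorem split_epi_with_enough_sections_is_sfb (V : Quantaloid) (A B : VCat V)
    (f : VFunctor V A B)
    (hsplit : ∃ s : VFunctor V B A,
      (∀ b, f.toFun (s.toFun b) = b) ∧
      (∀ b b', A.hom (s.toFun b) (s.toFun b') =
        V.cast (s.pt_eq b).symm (s.pt_eq b').symm (B.hom b b')))
    (hsections : ∀ a : A.Obj, ∃ s : VFunctor V B A,
      (∀ b, f.toFun (s.toFun b) = b) ∧
      (∀ b b', A.hom (s.toFun b) (s.toFun b') =
        V.cast (s.pt_eq b).symm (s.pt_eq b').symm (B.hom b b')) ∧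
      s.toFun (f.toFun a) = a) :
    f.IsSFB := by
  obtain ⟨s0, hs0, -⟩ := hsplit
  constructor
  · exact fun b => ⟨s0.toFun b, hs0 b⟩
  · intro a b
    obtain ⟨s, hfs, hhom, hsa⟩ := hsections a
    apply le_antisymm
    · apply le_sSup
      refine ⟨s.toFun b, hfs b, ?_⟩
      apply eq_of_heq
      have h1 : HEq (A.hom (s.toFun (f.toFun a)) (s.toFun b)) (A.hom a (s.toFun b)) := by
        rw [hsa]
      have h2 : HEq (B.hom (f.toFun a) b) (A.hom (s.toFun (f.toFun a)) (s.toFun b)) := by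
        rw [hhom]
        exact (V.cast_heq _ _ _).symm
      exact (h2.trans h1).trans (V.cast_heq _ _ _).symm
    · apply sSup_le
      rintro x ⟨a', h, rfl⟩
      subst h
      exact (f.map_le a a').trans_eq rfl
end
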